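/- Let n ≥ 3, let Λ be an n×n real diagonal matrix, and let A := T_n Λ T_n^{−1} be an element of the anti-reflective algebra 𝒜ℛ. Then the diagonal entries of Ψ := Ŝ_n A Ŝ_n coincide with those of Λ: Ψ_{jj} = Λ_{jj} for all j = 1,…,n; that is, the eigenvalues of A can be read off from the diagonal of Ŝ_n A Ŝ_n. -/

import Mathlib

open Matrix

/-- The sine transform matrix of type I: `(S_m)_{ij} = sqrt(2/(m+1))·sin(ijπ/(m+1))`
for `1 ≤ i,j ≤ m` (indexed here by `Fin m`, i.e. with indices shifted by one). -/
noncomputable def sineMat (m : ℕ) : Matrix (Fin m) (Fin m) ℝ :=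
  Matrix.of fun i j =>
    Real.sqrt (2 / (m + 1)) *
      Real.sin ((((i : ℕ) : ℝ) + 1) * (((j : ℕ) : ℝ) + 1) * Real.pi / (m + 1))

/-- The vector `p ∈ ℝ^{n-2}` with `p_j = 1 - j/(n-1)` for `j = 1,…,n-2` (1-based). -/
noncomputable def pvec (n : ℕ) : Fin (n - 2) → ℝ := fun j => 1 - (((j : ℕ) : ℝ) + 1) / ((n : ℝ) - 1)

/-- The `m×m` flip (anti-identity) matrix. -/
def flipMat (m : ℕ) : Matrix (Fin m) (Fin m) ℝ :=
  Matrix.of fun i j => if (i : ℕ) + (j : ℕ) = m - 1 then 1 else 0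

/-- The `n×n` matrix with block form `[[1,0,0],[x, M, y],[0,0,1]]`: first column `(1,x,0)ᵀ`,
last column `(0,y,1)ᵀ`, central `(n-2)×(n-2)` block `M`, zeros elsewhere in the first
and last rows. -/
noncomputable def blockT (n : ℕ) (x y : Fin (n - 2) → ℝ)
    (M : Matrix (Fin (n - 2)) (Fin (n - 2)) ℝ) : Matrix (Fin n) (Fin n) ℝ :=
  Matrix.of fun i j =>
    if (i : ℕ) = 0 then (if (j : ℕ) = 0 then 1 else 0)
    else if (i : ℕ) = n - 1 then (if (j : ℕ) = n - 1 then 1 else 0)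
    else if h : 0 < (i : ℕ) ∧ (i : ℕ) < n - 1 then
      if (j : ℕ) = 0 then x ⟨(i : ℕ) - 1, by omega⟩
      else if (j : ℕ) = n - 1 then y ⟨(i : ℕ) - 1, by omega⟩
      else if h2 : 0 < (j : ℕ) ∧ (j : ℕ) < n - 1 then
        M ⟨(i : ℕ) - 1, by omega⟩ ⟨(j : ℕ) - 1, by omega⟩
      else 0
    else 0

/-- The anti-reflective transform `T_n = [[1,0,0],[p, S_{n-2}, Jp],[0,0,1]]`. -/
noncomputable def Tmat (n : ℕ) : Matrix (Fin n) (Fin n) ℝ :=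
  blockT n (pvec n) ((flipMat (n - 2)).mulVec (pvec n)) (sineMat (n - 2))

/-- `T_n⁻¹ = [[1,0,0],[-S_{n-2}p, S_{n-2}, -S_{n-2}Jp],[0,0,1]]`. -/
noncomputable def TinvMat (n : ℕ) : Matrix (Fin n) (Fin n) ℝ :=
  blockT n (fun i => -((sineMat (n - 2)).mulVec (pvec n) i))
    (fun i => -((sineMat (n - 2)).mulVec ((flipMat (n - 2)).mulVec (pvec n)) i))
    (sineMat (n - 2))

/-- `Ŝ_n = diag(1, S_{n-2}, 1)`. -/
noncomputable def Shat (n : ℕ) : Matrix (Fin n) (Fin n) ℝ :=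
  Matrix.of fun i j =>
    if (i : ℕ) = 0 ∧ (j : ℕ) = 0 then 1
    else if (i : ℕ) = n - 1 ∧ (j : ℕ) = n - 1 then 1
    else if h : 0 < (i : ℕ) ∧ (i : ℕ) < n - 1 ∧ 0 < (j : ℕ) ∧ (j : ℕ) < n - 1 then
      sineMat (n - 2) ⟨(i : ℕ) - 1, by omega⟩ ⟨(j : ℕ) - 1, by omega⟩
    else 0


section Helper

open Real Finset

lemma cos_sum (m r : ℕ) (hr : 0 < r) (hrlt : r < 2*(m+1)) :
    ∑ k ∈ Finset.range m, Real.cos (((k:ℝ)+1)*(r:ℝ)*π/((m:ℝ)+1)) = -(((-1:ℝ)^r + 1)/2) := by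
  set θ : ℝ := r*π/(2*(m+1)) with hθ
  have hm1 : (0:ℝ) < m + 1 := by positivity
  have hs : 0 < Real.sin θ := by
    apply Real.sin_pos_of_pos_of_lt_pi
    · rw [hθ]; positivity
    · rw [hθ, div_lt_iff₀ (by positivity)]
      have : (r:ℝ) < 2*(m+1) := by exact_mod_cast hrlt
      nlinarith [Real.pi_pos]
  have key : (2*Real.sin θ) * ∑ k ∈ Finset.range m, Real.cos (((k:ℝ)+1)*(r:ℝ)*π/((m:ℝ)+1))
      = Real.sin ((2*(m:ℝ)+1)*θ) - Real.sin ((2*0+1)*θ) := by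
    rw [Finset.mul_sum]
    rw [show Real.sin ((2*(m:ℝ)+1)*θ) - Real.sin ((2*0+1)*θ)
        = ∑ k ∈ Finset.range m, (Real.sin ((2*((k:ℝ)+1)+1)*θ) - Real.sin ((2*(k:ℝ)+1)*θ)) by
      rw [eq_comm]
      have := Finset.sum_range_sub (fun k => Real.sin ((2*(k:ℝ)+1)*θ)) m
      convert this using 2 with k
      · push_cast; ring_nf
      · norm_num]
    apply Finset.sum_congr rfl
    intro k _
    have harg : ((k:ℝ)+1)*(r:ℝ)*π/((m:ℝ)+1) = (2*(k:ℝ)+2)*θ := by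
      rw [hθ]; field_simp
    rw [harg]
    have h1 : (2*((k:ℝ)+1)+1)*θ = (2*(k:ℝ)+2)*θ + θ := by ring
    have h2 : (2*(k:ℝ)+1)*θ = (2*(k:ℝ)+2)*θ - θ := by ring
    rw [h1, h2, Real.sin_add, Real.sin_sub]
    ring
  have hend : Real.sin ((2*(m:ℝ)+1)*θ) = -((-1:ℝ)^r * Real.sin θ) := by
    have : (2*(m:ℝ)+1)*θ = (r:ℝ)*π - θ := by rw [hθ]; field_simp; ring
    rw [this, Real.sin_nat_mul_pi_sub]
  have h0 : (2*(0:ℝ)+1)*θ = θ := by ring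
  rw [hend, h0] at key
  have hs' : Real.sin θ ≠ 0 := ne_of_gt hs
  field_simp at key
  nlinarith [key]

lemma sum_sin_sin (m : ℕ) (i j : Fin m) :
    ∑ k : Fin m, Real.sin ((((i:ℕ):ℝ)+1)*(((k:ℕ):ℝ)+1)*π/((m:ℝ)+1)) *
      Real.sin ((((k:ℕ):ℝ)+1)*(((j:ℕ):ℝ)+1)*π/((m:ℝ)+1))
      = if i = j then ((m:ℝ)+1)/2 else 0 := by
  have prod : ∀ k : Fin m,
      Real.sin ((((i:ℕ):ℝ)+1)*(((k:ℕ):ℝ)+1)*π/((m:ℝ)+1)) *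
        Real.sin ((((k:ℕ):ℝ)+1)*(((j:ℕ):ℝ)+1)*π/((m:ℝ)+1))
      = (Real.cos ((((k:ℕ):ℝ)+1)*((((i:ℕ):ℝ))-((j:ℕ):ℝ))*π/((m:ℝ)+1))
        - Real.cos ((((k:ℕ):ℝ)+1)*(((i:ℕ):ℝ)+((j:ℕ):ℝ)+2)*π/((m:ℝ)+1)))/2 := by
    intro k
    rw [Real.cos_sub_cos]
    have e1 : ((((k:ℕ):ℝ)+1)*((((i:ℕ):ℝ))-((j:ℕ):ℝ))*π/((m:ℝ)+1)
        + (((k:ℕ):ℝ)+1)*(((i:ℕ):ℝ)+((j:ℕ):ℝ)+2)*π/((m:ℝ)+1))/2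
        = (((i:ℕ):ℝ)+1)*(((k:ℕ):ℝ)+1)*π/((m:ℝ)+1) := by ring
    have e2 : ((((k:ℕ):ℝ)+1)*((((i:ℕ):ℝ))-((j:ℕ):ℝ))*π/((m:ℝ)+1)
        - (((k:ℕ):ℝ)+1)*(((i:ℕ):ℝ)+((j:ℕ):ℝ)+2)*π/((m:ℝ)+1))/2
        = -((((k:ℕ):ℝ)+1)*(((j:ℕ):ℝ)+1)*π/((m:ℝ)+1)) := by ring
    rw [e1, e2, Real.sin_neg]
    ring
  rw [Finset.sum_congr rfl (fun k _ => prod k)]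
  rw [← Finset.sum_div, Finset.sum_sub_distrib]
  have hsum2 : ∑ k : Fin m, Real.cos ((((k:ℕ):ℝ)+1)*(((i:ℕ):ℝ)+((j:ℕ):ℝ)+2)*π/((m:ℝ)+1))
      = -(((-1:ℝ)^((i:ℕ)+(j:ℕ)) + 1)/2) := by
    rw [Fin.sum_univ_eq_sum_range (fun k => Real.cos (((k:ℝ)+1)*(((i:ℕ):ℝ)+((j:ℕ):ℝ)+2)*π/((m:ℝ)+1)))]
    have := cos_sum m ((i:ℕ)+(j:ℕ)+2) (by omega) (by omega)
    rw [show ((((i:ℕ)+(j:ℕ)+2 : ℕ)):ℝ) = ((i:ℕ):ℝ)+((j:ℕ):ℝ)+2 by push_cast; ring] at this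
    rw [this, pow_add]
    norm_num
  by_cases hij : i = j
  · subst hij
    have hsum1 : ∑ k : Fin m, Real.cos ((((k:ℕ):ℝ)+1)*((((i:ℕ):ℝ))-((i:ℕ):ℝ))*π/((m:ℝ)+1))
        = (m:ℝ) := by
      simp
    rw [hsum1, hsum2, if_pos rfl]
    have : (-1:ℝ)^((i:ℕ)+(i:ℕ)) = 1 := by rw [← two_mul, pow_mul]; norm_num
    rw [this]; ring
  · rw [if_neg hij]
    rcases lt_or_gt_of_ne (fun h => hij (Fin.ext h) : (i:ℕ) ≠ (j:ℕ)) with h | h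
    · -- i < j
      have hsum1 : ∑ k : Fin m, Real.cos ((((k:ℕ):ℝ)+1)*((((i:ℕ):ℝ))-((j:ℕ):ℝ))*π/((m:ℝ)+1))
          = -(((-1:ℝ)^((i:ℕ)+(j:ℕ)) + 1)/2) := by
        have cast1 : (((i:ℕ):ℝ))-((j:ℕ):ℝ) = -((((j:ℕ)-(i:ℕ) : ℕ)):ℝ) := by
          rw [Nat.cast_sub h.le]; ring
        have congr1 : ∀ k : Fin m, Real.cos ((((k:ℕ):ℝ)+1)*((((i:ℕ):ℝ))-((j:ℕ):ℝ))*π/((m:ℝ)+1))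
            = Real.cos ((((k:ℕ):ℝ)+1)*((((j:ℕ)-(i:ℕ):ℕ)):ℝ)*π/((m:ℝ)+1)) := by
          intro k
          rw [cast1, show (((k:ℕ):ℝ)+1)*(-((((j:ℕ)-(i:ℕ) : ℕ)):ℝ))*π/((m:ℝ)+1)
            = -((((k:ℕ):ℝ)+1)*((((j:ℕ)-(i:ℕ):ℕ)):ℝ)*π/((m:ℝ)+1)) by ring, Real.cos_neg]
        rw [Finset.sum_congr rfl (fun k _ => congr1 k)]
        rw [Fin.sum_univ_eq_sum_range (fun k => Real.cos (((k:ℝ)+1)*((((j:ℕ)-(i:ℕ):ℕ)):ℝ)*π/((m:ℝ)+1)))]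
        rw [cos_sum m ((j:ℕ)-(i:ℕ)) (by omega) (by omega)]
        congr 2
        rw [show (i:ℕ)+(j:ℕ) = ((j:ℕ)-(i:ℕ)) + 2*(i:ℕ) by omega, pow_add, pow_mul]
        norm_num
      rw [hsum1, hsum2]; ring
    · -- j < i
      have hsum1 : ∑ k : Fin m, Real.cos ((((k:ℕ):ℝ)+1)*((((i:ℕ):ℝ))-((j:ℕ):ℝ))*π/((m:ℝ)+1))
          = -(((-1:ℝ)^((i:ℕ)+(j:ℕ)) + 1)/2) := by
        have cast1 : (((i:ℕ):ℝ))-((j:ℕ):ℝ) = ((((i:ℕ)-(j:ℕ) : ℕ)):ℝ) := by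
          rw [Nat.cast_sub h.le]
        rw [Finset.sum_congr rfl (fun k _ => by rw [cast1])]
        rw [Fin.sum_univ_eq_sum_range (fun k => Real.cos (((k:ℝ)+1)*((((i:ℕ)-(j:ℕ):ℕ)):ℝ)*π/((m:ℝ)+1)))]
        rw [cos_sum m ((i:ℕ)-(j:ℕ)) (by omega) (by omega)]
        congr 2
        rw [show (i:ℕ)+(j:ℕ) = ((i:ℕ)-(j:ℕ)) + 2*(j:ℕ) by omega, pow_add, pow_mul]
        norm_num
      rw [hsum1, hsum2]; ring
lemma sineMat_mul_self (m : ℕ) : sineMat m * sineMat m = 1 := by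
  ext i j
  rw [Matrix.mul_apply]
  have hm1 : (0:ℝ) < (m:ℝ) + 1 := by positivity
  have hsq : Real.sqrt (2/((m:ℝ)+1)) * Real.sqrt (2/((m:ℝ)+1)) = 2/((m:ℝ)+1) :=
    Real.mul_self_sqrt (by positivity)
  have : ∀ k : Fin m, sineMat m i k * sineMat m k j
      = (2/((m:ℝ)+1)) * (Real.sin ((((i:ℕ):ℝ)+1)*(((k:ℕ):ℝ)+1)*π/((m:ℝ)+1)) *
        Real.sin ((((k:ℕ):ℝ)+1)*(((j:ℕ):ℝ)+1)*π/((m:ℝ)+1))) := by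
    intro k
    simp only [sineMat, Matrix.of_apply]
    rw [mul_mul_mul_comm, hsq]
  rw [Finset.sum_congr rfl (fun k _ => this k), ← Finset.mul_sum, sum_sin_sin]
  by_cases hij : i = j
  · subst hij
    rw [if_pos rfl, Matrix.one_apply_eq]
    field_simp
  · rw [if_neg hij, Matrix.one_apply_ne hij, mul_zero]

lemma sum_middle {n : ℕ} (hn : 3 ≤ n) (f : Fin n → ℝ)
    (h0 : ∀ b : Fin n, (b:ℕ) = 0 → f b = 0) (hl : ∀ b : Fin n, (b:ℕ) = n-1 → f b = 0) :
    ∑ b, f b = ∑ k : Fin (n-2), f ⟨(k:ℕ)+1, by omega⟩ := by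
  rw [← Finset.sum_filter_of_ne (p := fun b : Fin n => 0 < (b:ℕ) ∧ (b:ℕ) < n-1)
    (by intro b _ hb; by_contra hc; push_neg at hc
        rcases Nat.eq_zero_or_pos (b:ℕ) with h | h
        · exact hb (h0 b h)
        · exact hb (hl b (by have := b.isLt; omega)))]
  refine Finset.sum_bij'
    (i := fun b hb => (⟨(b:ℕ)-1, by simp only [Finset.mem_filter] at hb; omega⟩ : Fin (n-2)))
    (j := fun k _ => (⟨(k:ℕ)+1, by omega⟩ : Fin n)) ?_ ?_ ?_ ?_ ?_
  · intro a ha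
    simp only [Finset.mem_filter, Finset.mem_univ, true_and]
  · intro a ha
    simp only [Finset.mem_filter, Finset.mem_univ, true_and]
    have := a.isLt; omega
  · intro a ha
    simp only [Finset.mem_filter] at ha
    ext; simp; omega
  · intro a ha; ext; simp
  · intro a ha
    simp only [Finset.mem_filter] at ha
    congr 1; ext; simp; omega

lemma shat_mul_T (n : ℕ) (hn : 3 ≤ n) :
    Shat n * Tmat n = blockT n ((sineMat (n-2)).mulVec (pvec n))
      ((sineMat (n-2)).mulVec ((flipMat (n-2)).mulVec (pvec n))) 1 := by
  ext a c
  rw [Matrix.mul_apply]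
  have hn1 : 2 ≤ n - 1 := by omega
  rcases eq_or_ne (a:ℕ) 0 with ha0 | ha0
  · rw [Finset.sum_eq_single (⟨0, by omega⟩ : Fin n)]
    · simp [Shat, Tmat, blockT, ha0] <;> (intros; omega)
    · intro b _ hb
      have hb' : (b:ℕ) ≠ 0 := fun h => hb (Fin.ext h)
      simp [Shat, ha0, hb'] <;> (intros; omega)
    · intro h; exact absurd (Finset.mem_univ _) h
  · rcases eq_or_ne (a:ℕ) (n-1) with hal | hal
    · rw [Finset.sum_eq_single (⟨n-1, by omega⟩ : Fin n)]
      · simp [Shat, Tmat, blockT, hal, ha0] <;> (intros; omega)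
      · intro b _ hb
        have hb' : (b:ℕ) ≠ n-1 := fun h => hb (Fin.ext h)
        simp [Shat, ha0, hal, hb'] <;> (intros; omega)
      · intro h; exact absurd (Finset.mem_univ _) h
    · -- middle row
      have ham : 0 < (a:ℕ) ∧ (a:ℕ) < n - 1 := by have := a.isLt; omega
      rw [sum_middle hn _ ?h0 ?hl]
      case h0 =>
        intro b hb; simp [Shat, ha0, hal, hb, ham.1.ne'] <;> (intros; omega)
      case hl =>
        intro b hb
        simp [Shat, ha0, hal, hb] <;> (intros; omega)
      have hsh : ∀ k : Fin (n-2), Shat n a ⟨(k:ℕ)+1, by omega⟩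
          = sineMat (n-2) ⟨(a:ℕ)-1, by omega⟩ ⟨(k:ℕ), by omega⟩ := by
        intro k
        have hk : 0 < (k:ℕ)+1 ∧ (k:ℕ)+1 < n-1 := by have := k.isLt; omega
        simp [Shat, ha0, hal, ham, hk] <;> (intros; omega)
      rcases eq_or_ne (c:ℕ) 0 with hc0 | hc0
      · have key : ∀ k : Fin (n-2), Shat n a ⟨(k:ℕ)+1, by omega⟩ * Tmat n ⟨(k:ℕ)+1, by omega⟩ c
            = sineMat (n-2) ⟨(a:ℕ)-1, by omega⟩ k * pvec n k := by
          intro k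
          have hk : 0 < (k:ℕ)+1 ∧ (k:ℕ)+1 < n-1 := by have := k.isLt; omega
          rw [hsh k]
          simp [Tmat, blockT, hc0, hk] <;> (intros; omega)
        rw [Finset.sum_congr rfl (fun k _ => key k)]
        simp [blockT, ha0, hal, ham, hc0, Matrix.mulVec, dotProduct]
          <;> (intros; omega)
      · rcases eq_or_ne (c:ℕ) (n-1) with hcl | hcl
        · have key : ∀ k : Fin (n-2), Shat n a ⟨(k:ℕ)+1, by omega⟩ * Tmat n ⟨(k:ℕ)+1, by omega⟩ c
              = sineMat (n-2) ⟨(a:ℕ)-1, by omega⟩ k * (flipMat (n-2)).mulVec (pvec n) k := by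
            intro k
            have hk : 0 < (k:ℕ)+1 ∧ (k:ℕ)+1 < n-1 := by have := k.isLt; omega
            rw [hsh k]
            simp [Tmat, blockT, hcl, hc0, hk] <;> (split_ifs <;> first | rfl | omega)
          rw [Finset.sum_congr rfl (fun k _ => key k)]
          simp [blockT, ha0, hal, ham, hcl, hc0, Matrix.mulVec, dotProduct]
            <;> (intros; omega)
        · -- middle column
          have hcm : 0 < (c:ℕ) ∧ (c:ℕ) < n - 1 := by have := c.isLt; omega
          have key : ∀ k : Fin (n-2), Shat n a ⟨(k:ℕ)+1, by omega⟩ * Tmat n ⟨(k:ℕ)+1, by omega⟩ c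
              = sineMat (n-2) ⟨(a:ℕ)-1, by omega⟩ k * sineMat (n-2) k ⟨(c:ℕ)-1, by omega⟩ := by
            intro k
            have hk : 0 < (k:ℕ)+1 ∧ (k:ℕ)+1 < n-1 := by have := k.isLt; omega
            rw [hsh k]
            simp [Tmat, blockT, hc0, hcl, hcm, hk] <;> (intros; omega)
          rw [Finset.sum_congr rfl (fun k _ => key k), ← Matrix.mul_apply, sineMat_mul_self]
          simp [blockT, ha0, hal, ham, hc0, hcl, hcm] <;> (intros; omega)

lemma tinv_mul_shat (n : ℕ) (hn : 3 ≤ n) :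
    TinvMat n * Shat n = blockT n (fun i => -((sineMat (n-2)).mulVec (pvec n) i))
      (fun i => -((sineMat (n-2)).mulVec ((flipMat (n-2)).mulVec (pvec n)) i)) 1 := by
  ext a c
  rw [Matrix.mul_apply]
  have hn1 : 2 ≤ n - 1 := by omega
  rcases eq_or_ne (c:ℕ) 0 with hc0 | hc0
  · rw [Finset.sum_eq_single (⟨0, by omega⟩ : Fin n)]
    · rcases eq_or_ne (a:ℕ) 0 with ha0 | ha0
      · simp [Shat, TinvMat, blockT, ha0, hc0] <;> (intros; omega)
      · rcases eq_or_ne (a:ℕ) (n-1) with hal | hal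
        · simp [Shat, TinvMat, blockT, hal, ha0, hc0] <;> (intros; omega)
        · have ham : 0 < (a:ℕ) ∧ (a:ℕ) < n - 1 := by have := a.isLt; omega
          simp [Shat, TinvMat, blockT, ha0, hal, ham, hc0] <;> (intros; omega)
    · intro b _ hb
      have hb' : (b:ℕ) ≠ 0 := fun h => hb (Fin.ext h)
      rcases eq_or_ne (b:ℕ) (n-1) with hbl | hbl
      · simp [Shat, hb', hbl, hc0] <;> (split_ifs <;> first | rfl | omega)
      · have hbm : 0 < (b:ℕ) ∧ (b:ℕ) < n - 1 := by have := b.isLt; omega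
        simp [Shat, hb', hbl, hc0, hbm] <;> (intros; omega)
    · intro h; exact absurd (Finset.mem_univ _) h
  · rcases eq_or_ne (c:ℕ) (n-1) with hcl | hcl
    · rw [Finset.sum_eq_single (⟨n-1, by omega⟩ : Fin n)]
      · rcases eq_or_ne (a:ℕ) 0 with ha0 | ha0
        · simp [Shat, TinvMat, blockT, ha0, hcl, hc0] <;> (intros; omega)
        · rcases eq_or_ne (a:ℕ) (n-1) with hal | hal
          · simp [Shat, TinvMat, blockT, hal, ha0, hcl] <;> (intros; omega)
          · have ham : 0 < (a:ℕ) ∧ (a:ℕ) < n - 1 := by have := a.isLt; omega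
            simp [Shat, TinvMat, blockT, ha0, hal, ham, hcl, hc0] <;> (intros; omega)
      · intro b _ hb
        have hb' : (b:ℕ) ≠ n-1 := fun h => hb (Fin.ext h)
        rcases eq_or_ne (b:ℕ) 0 with hb0 | hb0
        · simp [Shat, hb', hb0, hcl, hc0] <;> (split_ifs <;> first | rfl | omega)
        · have hbm : 0 < (b:ℕ) ∧ (b:ℕ) < n - 1 := by have := b.isLt; omega
          simp [Shat, hb', hb0, hcl, hc0, hbm] <;> (intros; omega)
      · intro h; exact absurd (Finset.mem_univ _) h
    · -- middle column
      have hcm : 0 < (c:ℕ) ∧ (c:ℕ) < n - 1 := by have := c.isLt; omega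
      rw [sum_middle hn _ ?h0 ?hl]
      case h0 =>
        intro b hb; simp [Shat, hb, hc0, hcm.1.ne'] <;> (intros; omega)
      case hl =>
        intro b hb
        simp [Shat, hb, hcl, hc0] <;> (intros; omega)
      have hsh : ∀ k : Fin (n-2), Shat n ⟨(k:ℕ)+1, by omega⟩ c
          = sineMat (n-2) ⟨(k:ℕ), by omega⟩ ⟨(c:ℕ)-1, by omega⟩ := by
        intro k
        have hk : 0 < (k:ℕ)+1 ∧ (k:ℕ)+1 < n-1 := by have := k.isLt; omega
        simp [Shat, hc0, hcl, hcm, hk] <;> (intros; omega)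
      rcases eq_or_ne (a:ℕ) 0 with ha0 | ha0
      · have key : ∀ k : Fin (n-2), TinvMat n a ⟨(k:ℕ)+1, by omega⟩ * Shat n ⟨(k:ℕ)+1, by omega⟩ c
            = 0 := by
          intro k
          have hk : 0 < (k:ℕ)+1 ∧ (k:ℕ)+1 < n-1 := by have := k.isLt; omega
          simp [TinvMat, blockT, ha0] <;> (intros; omega)
        rw [Finset.sum_congr rfl (fun k _ => key k)]
        simp [blockT, ha0, hc0] <;> (intros; omega)
      · rcases eq_or_ne (a:ℕ) (n-1) with hal | hal
        · have key : ∀ k : Fin (n-2), TinvMat n a ⟨(k:ℕ)+1, by omega⟩ * Shat n ⟨(k:ℕ)+1, by omega⟩ c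
              = 0 := by
            intro k
            have hk : 0 < (k:ℕ)+1 ∧ (k:ℕ)+1 < n-1 := by have := k.isLt; omega
            simp [TinvMat, blockT, hal, ha0] <;> (intros; omega)
          rw [Finset.sum_congr rfl (fun k _ => key k)]
          simp [blockT, hal, ha0, hcl, hc0] <;> (intros; omega)
        · have ham : 0 < (a:ℕ) ∧ (a:ℕ) < n - 1 := by have := a.isLt; omega
          have key : ∀ k : Fin (n-2), TinvMat n a ⟨(k:ℕ)+1, by omega⟩ * Shat n ⟨(k:ℕ)+1, by omega⟩ c
              = sineMat (n-2) ⟨(a:ℕ)-1, by omega⟩ k * sineMat (n-2) k ⟨(c:ℕ)-1, by omega⟩ := by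
            intro k
            have hk : 0 < (k:ℕ)+1 ∧ (k:ℕ)+1 < n-1 := by have := k.isLt; omega
            rw [hsh k]
            simp [TinvMat, blockT, ha0, hal, ham, hk] <;> (intros; omega)
          rw [Finset.sum_congr rfl (fun k _ => key k), ← Matrix.mul_apply, sineMat_mul_self]
          simp [blockT, ha0, hal, ham, hc0, hcl, hcm] <;> (intros; omega)

end Helper

/-- for `A = T_n Λ T_n⁻¹ ∈ 𝒜ℛ` with `Λ = diagonal d`, the diagonal
entries of `Ψ = Ŝ_n A Ŝ_n` coincide with those of `Λ`. -/
theorem diag_shat_antireflective (n : ℕ) (hn : 3 ≤ n) (d : Fin n → ℝ) (j : Fin n) :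
    (Shat n * (Tmat n * Matrix.diagonal d * TinvMat n) * Shat n) j j = d j := by
  have hassoc : Shat n * (Tmat n * Matrix.diagonal d * TinvMat n) * Shat n
      = (Shat n * Tmat n) * Matrix.diagonal d * (TinvMat n * Shat n) := by
    simp only [Matrix.mul_assoc]
  rw [hassoc, shat_mul_T n hn, tinv_mul_shat n hn]
  set x := (sineMat (n-2)).mulVec (pvec n)
  set y := (sineMat (n-2)).mulVec ((flipMat (n-2)).mulVec (pvec n))
  set L := blockT n x y 1 with hL
  set R := blockT n (fun i => -x i) (fun i => -y i) 1 with hR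
  rw [Matrix.mul_apply]
  have hterm : ∀ a : Fin n, (L * Matrix.diagonal d) j a = L j a * d a := fun a =>
    Matrix.mul_diagonal _ _ _ _
  rw [Finset.sum_congr rfl (fun a _ => by rw [hterm a])]
  rcases eq_or_ne (j:ℕ) 0 with hj0 | hj0
  · rw [Finset.sum_eq_single j]
    · have hLjj : L j j = 1 := by simp [hL, blockT, hj0]
      have hRjj : R j j = 1 := by simp [hR, blockT, hj0]
      rw [hLjj, hRjj]; ring
    · intro b _ hb
      have hb' : (b:ℕ) ≠ 0 := fun h => hb (Fin.ext (h.trans hj0.symm))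
      have hLjb : L j b = 0 := by
        simp [hL, blockT, hj0, hb'] <;> (intros; omega)
      rw [hLjb]; ring
    · intro h; exact absurd (Finset.mem_univ _) h
  · rcases eq_or_ne (j:ℕ) (n-1) with hjl | hjl
    · rw [Finset.sum_eq_single j]
      · have hLjj : L j j = 1 := by
          simp [hL, blockT, hj0, hjl] <;> (intros; omega)
        have hRjj : R j j = 1 := by
          simp [hR, blockT, hj0, hjl] <;> (intros; omega)
        rw [hLjj, hRjj]; ring
      · intro b _ hb
        have hb' : (b:ℕ) ≠ n-1 := fun h => hb (Fin.ext (h.trans hjl.symm))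
        have hLjb : L j b = 0 := by
          simp [hL, blockT, hj0, hjl, hb'] <;> (intros; omega)
        rw [hLjb]; ring
      · intro h; exact absurd (Finset.mem_univ _) h
    · have hjm : 0 < (j:ℕ) ∧ (j:ℕ) < n - 1 := by have := j.isLt; omega
      rw [Finset.sum_eq_single j]
      · have hLjj : L j j = 1 := by
          simp [hL, blockT, hj0, hjl, hjm] <;> (intros; omega)
        have hRjj : R j j = 1 := by
          simp [hR, blockT, hj0, hjl, hjm] <;> (intros; omega)
        rw [hLjj, hRjj]; ring
      · intro b _ hb
        rcases eq_or_ne (b:ℕ) 0 with hb0 | hb0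
        · have hRbj : R b j = 0 := by
            simp [hR, blockT, hb0, hj0] <;> (intros; omega)
          rw [hRbj]; ring
        · rcases eq_or_ne (b:ℕ) (n-1) with hbl | hbl
          · have hRbj : R b j = 0 := by
              simp [hR, blockT, hbl, hb0, hjl] <;> (intros; omega)
            rw [hRbj]; ring
          · have hbm : 0 < (b:ℕ) ∧ (b:ℕ) < n - 1 := by have := b.isLt; omega
            have hne : ((b:ℕ)-1 : ℕ) ≠ ((j:ℕ)-1 : ℕ) := by
              have : (b:ℕ) ≠ (j:ℕ) := fun h => hb (Fin.ext h)
              omega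
            have hLjb : L j b = 0 := by
              simp only [hL, blockT, Matrix.of_apply]
              rw [if_neg hj0, if_neg hjl, dif_pos hjm, if_neg hb0, if_neg hbl,
                dif_pos hbm]
              exact Matrix.one_apply_ne (fun h => hne (congrArg Fin.val h).symm)
            rw [hLjb]; ring
      · intro h; exact absurd (Finset.mem_univ _) h
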